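/- Every nil-reversible ring is nil-Armendariz. -/

import Mathlib

/-!
In a nil-reversible ring the nilpotent elements form a two-sided ideal `N`: if `a ^ n = 0`, then
`a * z = 0 ↔ z * a = 0` lets every occurrence of `a` in a word be moved next to the others, so any
word containing `n` letters `a` vanishes. Hence `R ⧸ N` is reduced. Reduced rings are Armendariz,
and `f * g ∈ N[X]` says that the images of `f` and `g` in `(R ⧸ N)[X]` multiply to zero.
-/

open Polynomial Finset

theorem isNilpotent_mul_comm {M : Type*} [MonoidWithZero M] {x y : M} :
    IsNilpotent (x * y) ↔ IsNilpotent (y * x) := by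
  have swap : ∀ x y : M, IsNilpotent (x * y) → IsNilpotent (y * x) := fun x y ⟨n, hn⟩ =>
    ⟨n + 1, by rw [pow_succ', mul_assoc, ← mul_pow_mul, hn, zero_mul, mul_zero]⟩
  exact ⟨swap x y, swap y x⟩

theorem sum_pow_eq_sum_prod_ofFn {S ι : Type*} [Semiring S] [Fintype ι] (w : ι → S) (K : ℕ) :
    (∑ i, w i) ^ K = ∑ v : Fin K → ι, ((List.ofFn v).map w).prod := by
  induction K with
  | zero => simp
  | succ K ih =>
    rw [pow_succ', ih, Finset.sum_mul_sum, ← Fintype.sum_prod_type',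
      ← (Fin.consEquiv fun _ => ι).sum_comp]
    simp [Fin.consEquiv]

section Reduced

variable {S : Type*} [Ring S] [IsReduced S]

theorem IsReduced.mul_swap_eq_zero {a b : S} (h : a * b = 0) : b * a = 0 :=
  IsNilpotent.eq_zero ⟨2, by rw [sq, mul_assoc, ← mul_assoc a, h, zero_mul, mul_zero]⟩

theorem IsReduced.mul_mul_eq_zero {a b : S} (h : a * b = 0) (r : S) : a * r * b = 0 :=
  IsNilpotent.eq_zero ⟨2, by
    rw [sq, show a * r * b * (a * r * b) = a * r * (b * a) * (r * b) by simp only [mul_assoc],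
      IsReduced.mul_swap_eq_zero h, mul_zero, zero_mul]⟩

theorem Polynomial.coeff_mul_coeff_eq_zero_of_mul_eq_zero {f g : S[X]} (h : f * g = 0) (i j : ℕ) :
    f.coeff i * g.coeff j = 0 := by
  induction hk : i + j using Nat.strong_induction_on generalizing i j with
  | _ k ihk =>
  induction j using Nat.strong_induction_on generalizing i with
  | _ j ihj =>
  -- In `(f * g).coeff k * g.coeff j`, the terms with `q < j` vanish by the inner induction, those
  -- with `q > j` because `f.coeff p * g.coeff j = 0` by the outer one; this leaves `a * b * b = 0`
  -- for `a * b = f.coeff i * g.coeff j`, whence `(a * b) ^ 2 = 0`.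
  have hsum : ∑ p ∈ antidiagonal k, f.coeff p.1 * g.coeff p.2 * g.coeff j = 0 := by
    rw [← Finset.sum_mul, ← coeff_mul, h, coeff_zero, zero_mul]
  have hother : ∀ p ∈ antidiagonal k, p ≠ (i, j) → f.coeff p.1 * g.coeff p.2 * g.coeff j = 0 := by
    rintro ⟨p, q⟩ hpq hne
    rw [HasAntidiagonal.mem_antidiagonal] at hpq
    rcases lt_or_gt_of_ne (show q ≠ j by rintro rfl; exact hne (by ext <;> simp; omega)) with
      hlt | hgt
    · rw [ihj q hlt p (by omega), zero_mul]
    · exact IsReduced.mul_mul_eq_zero (ihk (p + j) (by omega) p j rfl) _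
  rw [Finset.sum_eq_single_of_mem (i, j) (HasAntidiagonal.mem_antidiagonal.mpr hk) hother] at hsum
  exact IsNilpotent.eq_zero ⟨2, by rw [sq, ← mul_assoc]; exact IsReduced.mul_mul_eq_zero hsum _⟩

end Reduced

def IsNilReversible (R : Type*) [Ring R] : Prop :=
  ∀ a : R, IsNilpotent a → ∀ x : R, x * a = 0 ↔ a * x = 0

namespace IsNilReversible

variable {R : Type*} [Ring R]

theorem prod_mul_pow_eq_zero (hR : IsNilReversible R) {ι : Type*} [DecidableEq ι] (w : ι → R)
    (i₀ : ι) {n : ℕ} (hn : w i₀ ^ n = 0) (l : List ι) (j : ℕ) (hl : n ≤ l.count i₀ + j) :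
    (l.map w).prod * w i₀ ^ j = 0 := by
  induction l generalizing j with
  | nil => simpa using pow_eq_zero_of_le (by simpa using hl) hn
  | cons i l ih =>
    rw [List.map_cons, List.prod_cons, mul_assoc]
    by_cases hi : i = i₀
    · subst hi
      have h : (l.map w).prod * w i ^ j * w i = 0 := by
        rw [mul_assoc, ← pow_succ]
        exact ih (j + 1) (by simp at hl; omega)
      rw [(hR _ ⟨n, hn⟩ _).mp h]
    · rw [ih j (by simpa [List.count_cons, hi] using hl), mul_zero]

theorem mul_pow_mul_pow_eq_zero (hR : IsNilReversible R) {a : R} {n : ℕ} (ha : a ^ n = 0)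
    (r : R) : ∀ k j : ℕ, n ≤ k + j → (r * a) ^ k * a ^ j = 0
  | 0, j, h => by rw [pow_zero, one_mul]; exact pow_eq_zero_of_le (by omega) ha
  | k + 1, j, h => by
    have h' : (r * a) ^ k * a ^ j * a = 0 := by
      rw [mul_assoc, ← pow_succ]
      exact mul_pow_mul_pow_eq_zero hR ha r k (j + 1) (by omega)
    rw [pow_succ', mul_assoc, mul_assoc, (hR a ⟨n, ha⟩ _).mp h', mul_zero]

theorem isNilpotent_mul_left (hR : IsNilReversible R) {a : R} (ha : IsNilpotent a) (r : R) :
    IsNilpotent (r * a) :=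
  let ⟨n, hn⟩ := ha
  ⟨n, by simpa using hR.mul_pow_mul_pow_eq_zero hn r n 0 le_rfl⟩

theorem isNilpotent_mul_right (hR : IsNilReversible R) {a : R} (ha : IsNilpotent a) (r : R) :
    IsNilpotent (a * r) :=
  isNilpotent_mul_comm.mp (hR.isNilpotent_mul_left ha r)

theorem isNilpotent_add (hR : IsNilReversible R) {x y : R} (hx : IsNilpotent x)
    (hy : IsNilpotent y) : IsNilpotent (x + y) := by
  obtain ⟨n, hn⟩ := hx
  obtain ⟨m, hm⟩ := hy
  let w : Bool → R := fun b => bif b then x else y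
  refine ⟨n + m, ?_⟩
  rw [show x + y = ∑ b, w b from (Fintype.sum_bool w).symm, sum_pow_eq_sum_prod_ofFn]
  refine Finset.sum_eq_zero fun v _ => ?_
  have hcount := List.count_true_add_count_false (List.ofFn v)
  rw [List.length_ofFn] at hcount
  by_cases h : n ≤ (List.ofFn v).count true
  · simpa using hR.prod_mul_pow_eq_zero w true hn (List.ofFn v) 0 (by omega)
  · simpa using hR.prod_mul_pow_eq_zero w false hm (List.ofFn v) 0 (by omega)

def nilradical (hR : IsNilReversible R) : TwoSidedIdeal R :=
  .mk' {a | IsNilpotent a} .zero hR.isNilpotent_add IsNilpotent.neg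
    (fun ha => hR.isNilpotent_mul_left ha _) (fun ha => hR.isNilpotent_mul_right ha _)

theorem mk'_eq_zero_iff (hR : IsNilReversible R) {a : R} :
    hR.nilradical.ringCon.mk' a = 0 ↔ IsNilpotent a := by
  rw [← TwoSidedIdeal.mem_ker, TwoSidedIdeal.ker_ringCon_mk', nilradical, TwoSidedIdeal.mem_mk']
  rfl

theorem isReduced_quotient (hR : IsNilReversible R) : IsReduced hR.nilradical.ringCon.Quotient where
  eq_zero x := by
    rintro ⟨k, hk⟩
    obtain ⟨a, rfl⟩ := RingCon.mk'_surjective _ x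
    rw [← map_pow, hR.mk'_eq_zero_iff] at hk
    exact hR.mk'_eq_zero_iff.mpr hk.of_pow

end IsNilReversible

open Polynomial in
/-- Every nil-reversible ring is nil-Armendariz. -/
theorem nilReversible_is_nilArmendariz (R : Type*) [Ring R]
    (hnr : ∀ a : R, IsNilpotent a → ∀ x : R, x * a = 0 ↔ a * x = 0) :
    ∀ f g : R[X], (∀ k : ℕ, IsNilpotent ((f * g).coeff k)) →
      ∀ i j : ℕ, IsNilpotent (f.coeff i * g.coeff j) := by
  intro f g hfg i j
  have hR : IsNilReversible R := hnr
  have := hR.isReduced_quotient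
  have hπ : f.map hR.nilradical.ringCon.mk' * g.map hR.nilradical.ringCon.mk' = 0 := by
    ext k
    rw [← Polynomial.map_mul, coeff_map, coeff_zero, hR.mk'_eq_zero_iff]
    exact hfg k
  have h := coeff_mul_coeff_eq_zero_of_mul_eq_zero hπ i j
  rwa [coeff_map, coeff_map, ← map_mul, hR.mk'_eq_zero_iff] at h
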